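/- Let f be a smooth function on an open neighborhood U of 0 in ℝⁿ and N ∈ ℕ, and set f^[N](x) = Σ_{α : ⟨α⟩ = N} (1/α!) ∂^α f(0) x^α. Then f has weight N if and only if f^[N] is a non-zero polynomial and f∘δ_t = t^N f^[N] + O(t^{N+1}) in C^∞(U) as t → 0. -/

import Mathlib

open scoped BigOperators
open Filter Topology

namespace Carnot

/-- Anisotropic dilation `t · x = (t^{w_1} x_1, …, t^{w_n} x_n)`. -/
def dil {n : ℕ} (w : Fin n → ℕ) (t : ℝ) (x : Fin n → ℝ) : Fin n → ℝ :=
  fun i => t ^ (w i) * x i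

/-- Weighted length `⟨α⟩` of a multi-index. -/
def wlen {n : ℕ} (w : Fin n → ℕ) (α : Fin n → ℕ) : ℕ := ∑ i, w i * α i

/-- Length `|α|` of a multi-index. -/
def mlen {n : ℕ} (α : Fin n → ℕ) : ℕ := ∑ i, α i

/-- A vector field acting on a function: `(Xf)(x) = Df(x)[X(x)]`. -/
noncomputable def vf {n : ℕ} (X : (Fin n → ℝ) → (Fin n → ℝ)) (f : (Fin n → ℝ) → ℝ) :
    (Fin n → ℝ) → ℝ :=
  fun x => fderiv ℝ f x (X x)

/-- Iterated action `X_I f = X_{i_1}(X_{i_2}(⋯(X_{i_k} f)))`. -/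
noncomputable def vfSeq {n : ℕ} (X : Fin n → (Fin n → ℝ) → (Fin n → ℝ)) :
    List (Fin n) → ((Fin n → ℝ) → ℝ) → ((Fin n → ℝ) → ℝ)
  | [], f => f
  | i :: I, f => vf (X i) (vfSeq X I f)

/-- Weight `⟨I⟩` of a finite sequence of indices. -/
def seqW {n : ℕ} (w : Fin n → ℕ) (I : List (Fin n)) : ℕ := (I.map w).sum

/-- The list `(1,…,1,2,…,2,…,n,…,n)` with `i` repeated `α i` times. -/
def multiList {n : ℕ} (α : Fin n → ℕ) : List (Fin n) :=
  (List.finRange n).flatMap fun i => List.replicate (α i) i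

/-- `X^α f = X_1^{α_1} ⋯ X_n^{α_n} f`. -/
noncomputable def vfPow {n : ℕ} (X : Fin n → (Fin n → ℝ) → (Fin n → ℝ)) (α : Fin n → ℕ)
    (f : (Fin n → ℝ) → ℝ) : (Fin n → ℝ) → ℝ :=
  vfSeq X (multiList α) f

/-- Partial derivative `∂^α f`. -/
noncomputable def pdPow {n : ℕ} (α : Fin n → ℕ) (f : (Fin n → ℝ) → ℝ) : (Fin n → ℝ) → ℝ :=
  vfPow (fun i => fun _ => Pi.single i (1 : ℝ)) α f

/-- Lie bracket of two vector fields. -/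
noncomputable def lieBk {n : ℕ} (X Y : (Fin n → ℝ) → (Fin n → ℝ)) : (Fin n → ℝ) → (Fin n → ℝ) :=
  fun x => fderiv ℝ Y x (X x) - fderiv ℝ X x (Y x)

/-- A weight sequence: non-decreasing, positive, starting at `1`. -/
structure IsWeight {n : ℕ} (w : Fin n → ℕ) : Prop where
  mono : Monotone w
  pos : ∀ i, 0 < w i
  first : ∀ h : 0 < n, w ⟨0, h⟩ = 1

/-- An `H`-frame on `V`. -/
structure IsHFrame {n : ℕ} (w : Fin n → ℕ) (X : Fin n → (Fin n → ℝ) → (Fin n → ℝ))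
    (V : Set (Fin n → ℝ)) : Prop where
  smooth : ∀ j, ContDiffOn ℝ (⊤ : ℕ∞) (X j) V
  basis : ∀ x ∈ V, LinearIndependent ℝ fun j => X j x
  bracket : ∃ L : Fin n → Fin n → Fin n → (Fin n → ℝ) → ℝ,
    (∀ i j k, ContDiffOn ℝ (⊤ : ℕ∞) (L i j k) V) ∧
    (∀ i j k, ¬ w k ≤ w i + w j → ∀ x ∈ V, L i j k x = 0) ∧
    ∀ i j, ∀ x ∈ V, lieBk (X i) (X j) x = ∑ k, L i j k x • X k x

/-- `f` has order `≥ N` at `a` with respect to the frame `X`. -/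
def OrderGe {n : ℕ} (w : Fin n → ℕ) (X : Fin n → (Fin n → ℝ) → (Fin n → ℝ))
    (f : (Fin n → ℝ) → ℝ) (a : Fin n → ℝ) (N : ℕ) : Prop :=
  ∀ I : List (Fin n), seqW w I < N → vfSeq X I f a = 0

/-- `f` has order exactly `N` at `a` with respect to the frame `X`. -/
def OrderEq {n : ℕ} (w : Fin n → ℕ) (X : Fin n → (Fin n → ℝ) → (Fin n → ℝ))
    (f : (Fin n → ℝ) → ℝ) (a : Fin n → ℝ) (N : ℕ) : Prop :=
  OrderGe w X f a N ∧ ∃ I : List (Fin n), seqW w I = N ∧ vfSeq X I f a ≠ 0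

/-- `f` has weight `≥ N`. -/
def WeightGe {n : ℕ} (w : Fin n → ℕ) (f : (Fin n → ℝ) → ℝ) (N : ℤ) : Prop :=
  ∀ α : Fin n → ℕ, (wlen w α : ℤ) < N → pdPow α f 0 = 0

/-- `f` has weight exactly `N`. -/
def WeightEq {n : ℕ} (w : Fin n → ℕ) (f : (Fin n → ℝ) → ℝ) (N : ℤ) : Prop :=
  WeightGe w f N ∧ ∃ α : Fin n → ℕ, (wlen w α : ℤ) = N ∧ pdPow α f 0 ≠ 0

/-- A pseudo-norm for the anisotropic dilations. -/
structure IsPseudoNorm {n : ℕ} (w : Fin n → ℕ) (ρ : (Fin n → ℝ) → ℝ) : Prop where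
  cont : Continuous ρ
  nonneg : ∀ x, 0 ≤ ρ x
  pos : ∀ x, x ≠ 0 → 0 < ρ x
  homog : ∀ t x, ρ (dil w t x) = |t| * ρ x

/-- Multi-indices with all entries `< B`. -/
def mIdx (n B : ℕ) : Finset (Fin n → ℕ) := Fintype.piFinset fun _ => Finset.range B

/-- The monomial `x^α`. -/
def monom {n : ℕ} (α : Fin n → ℕ) (x : Fin n → ℝ) : ℝ := ∏ i, x i ^ α i

/-- Taylor coefficient `(1/α!) ∂^α f(0)`. -/
noncomputable def taylorCoeff {n : ℕ} (α : Fin n → ℕ) (f : (Fin n → ℝ) → ℝ) : ℝ :=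
  ((∏ i, Nat.factorial (α i) : ℕ) : ℝ)⁻¹ * pdPow α f 0

/-- The homogeneous part `f^[ℓ]` of degree `ℓ` of the Taylor series of `f` at `0`. -/
noncomputable def homPart {n : ℕ} (w : Fin n → ℕ) (f : (Fin n → ℝ) → ℝ) (ℓ : ℕ) :
    (Fin n → ℝ) → ℝ :=
  fun x => ∑ α ∈ (mIdx n (ℓ + 1)).filter (fun α => wlen w α = ℓ),
    taylorCoeff α f * monom α x

/-- `u_t = O(t^m)` in `C^∞(U)` as `t → 0`. -/
def BigOC {n : ℕ} (U : Set (Fin n → ℝ)) (u : ℝ → (Fin n → ℝ) → ℝ) (m : ℤ) : Prop :=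
  ∀ K : Set (Fin n → ℝ), K ⊆ U → IsCompact K → ∀ β : Fin n → ℕ,
    ∃ C : ℝ, ∀ᶠ t in 𝓝[≠] (0 : ℝ), ∀ x ∈ K, |pdPow β (u t) x| ≤ C * |t| ^ m

/-- Componentwise `O(t^m)` in `C^∞(U)` for families of vector fields. -/
def BigOCVF {n : ℕ} (U : Set (Fin n → ℝ)) (u : ℝ → (Fin n → ℝ) → Fin n → ℝ)
    (m : ℤ) : Prop :=
  ∀ K : Set (Fin n → ℝ), K ⊆ U → IsCompact K → ∀ β : Fin n → ℕ, ∀ k : Fin n,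
    ∃ C : ℝ, ∀ᶠ t in 𝓝[≠] (0 : ℝ), ∀ x ∈ K,
      |pdPow β (fun y => u t y k) x| ≤ C * |t| ^ m

/-- `Θ = O_w(‖x‖^{w+m})` near `x = 0`. -/
def IsOw {n : ℕ} (w : Fin n → ℕ) (ρ : (Fin n → ℝ) → ℝ)
    (Θ : (Fin n → ℝ) → (Fin n → ℝ)) (m : ℤ) : Prop :=
  ∀ k, ∃ C : ℝ, ∀ᶠ x in 𝓝 (0 : Fin n → ℝ), |Θ x k| ≤ C * ρ x ^ ((w k : ℤ) + m)

/-- A `w`-homogeneous map. -/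
def WHomog {n : ℕ} (w : Fin n → ℕ) (φ : (Fin n → ℝ) → (Fin n → ℝ)) : Prop :=
  ∀ t x, φ (dil w t x) = dil w t (φ x)

/-- A map whose components are polynomial functions. -/
def IsPolyMap {n : ℕ} (φ : (Fin n → ℝ) → (Fin n → ℝ)) : Prop :=
  ∀ k, ∃ p : MvPolynomial (Fin n) ℝ, ∀ x, φ x k = MvPolynomial.eval x p

/-- A vector field homogeneous of degree `m`: `δ_t^* Y = t^m Y` for `t ≠ 0`. -/
def VFHomog {n : ℕ} (w : Fin n → ℕ) (Y : (Fin n → ℝ) → (Fin n → ℝ)) (m : ℤ) : Prop :=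
  ∀ t : ℝ, t ≠ 0 → ∀ x k, (t : ℝ) ^ (-(w k : ℤ)) * Y (dil w t x) k = t ^ m * Y x k

/-- A vector field has weight `W`: each component `X_k` has weight `≥ W + w_k`,
with equality for some `k`. -/
def VFWeightEq {n : ℕ} (w : Fin n → ℕ) (X : (Fin n → ℝ) → (Fin n → ℝ)) (W : ℤ) :
    Prop :=
  (∀ k, ∀ α : Fin n → ℕ, (wlen w α : ℤ) < W + w k →
    pdPow α (fun y => X y k) 0 = 0) ∧
  ∃ k, ∃ α : Fin n → ℕ, (wlen w α : ℤ) = W + w k ∧ pdPow α (fun y => X y k) 0 ≠ 0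

/-- The homogeneous part `X^[ℓ]` of degree `ℓ` of a vector field. -/
noncomputable def vfPart {n : ℕ} (w : Fin n → ℕ) (X : (Fin n → ℝ) → (Fin n → ℝ)) (ℓ : ℤ) :
    (Fin n → ℝ) → Fin n → ℝ :=
  fun x k => ∑ α ∈ (mIdx n ((ℓ + w k).toNat + 1)).filter
      (fun α => (wlen w α : ℤ) = ℓ + w k),
    taylorCoeff α (fun y => X y k) * monom α x

/-- `φ` produces privileged coordinates at `a` adapted to the `H`-frame `X`:
it is linearly adapted at `a` and each component has order `w_k` at `a`. -/
def PrivilegedAt {n : ℕ} (w : Fin n → ℕ) (X : Fin n → (Fin n → ℝ) → (Fin n → ℝ))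
    (a : Fin n → ℝ) (φ : (Fin n → ℝ) → (Fin n → ℝ)) : Prop :=
  (∀ j, fderiv ℝ φ a (X j a) = Pi.single j 1) ∧
  ∀ k, OrderEq w X (fun x => φ x k) a (w k)
section Infra

variable {n : ℕ}

/-- The constant coordinate vector fields used in `pdPow`. -/
abbrev cP (n : ℕ) : Fin n → (Fin n → ℝ) → (Fin n → ℝ) := fun i => fun _ => Pi.single i 1

lemma pdPow_def (α : Fin n → ℕ) (f : (Fin n → ℝ) → ℝ) :
    pdPow α f = vfSeq (cP n) (multiList α) f := rfl

lemma vf_cP (i : Fin n) (g : (Fin n → ℝ) → ℝ) :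
    vf (cP n i) g = fun x => fderiv ℝ g x (Pi.single i 1) := rfl

lemma vfSeq_append (X : Fin n → (Fin n → ℝ) → (Fin n → ℝ)) (I J : List (Fin n))
    (g : (Fin n → ℝ) → ℝ) : vfSeq X (I ++ J) g = vfSeq X I (vfSeq X J g) := by
  induction I with
  | nil => rfl
  | cons i I ih =>
    rw [List.cons_append]
    show vf (X i) (vfSeq X (I ++ J) g) = vf (X i) (vfSeq X I (vfSeq X J g))
    rw [ih]

lemma seqW_append (w : Fin n → ℕ) (I J : List (Fin n)) :
    seqW w (I ++ J) = seqW w I + seqW w J := by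
  simp [seqW]

lemma seqW_perm (w : Fin n → ℕ) {I J : List (Fin n)} (h : I.Perm J) :
    seqW w I = seqW w J := (h.map w).sum_eq

lemma count_multiList (α : Fin n → ℕ) (i : Fin n) :
    (multiList α).count i = α i := by
  unfold multiList
  rw [List.count_flatMap]
  have : ∀ l : List (Fin n), l.Nodup → (i ∈ l → (l.map fun j => (List.replicate (α j) j).count i).sum = α i)
      ∧ (i ∉ l → (l.map fun j => (List.replicate (α j) j).count i).sum = 0) := by
    intro l hl
    induction l with
    | nil => simp
    | cons a l ih =>
      obtain ⟨ha, hl'⟩ := List.nodup_cons.1 hl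
      refine ⟨?_, ?_⟩
      · intro hmem
        rcases List.mem_cons.1 hmem with h | h
        · subst h
          simp only [List.map_cons, List.sum_cons]
          rw [(ih hl').2 ha]
          simp [List.count_replicate]
        · have hai : a ≠ i := by rintro rfl; exact ha h
          simp only [List.map_cons, List.sum_cons]
          rw [(ih hl').1 h]
          simp [List.count_replicate, hai]
      · intro hmem
        simp only [List.mem_cons, not_or] at hmem
        simp only [List.map_cons, List.sum_cons]
        rw [(ih hl').2 hmem.2]
        simp [List.count_replicate, Ne.symm hmem.1]
  exact (this _ (List.nodup_finRange n)).1 (List.mem_finRange i)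

lemma perm_multiList (I : List (Fin n)) : I.Perm (multiList (fun i => I.count i)) := by
  rw [List.perm_iff_count]
  intro a
  rw [count_multiList]

lemma seqW_multiList (w : Fin n → ℕ) (α : Fin n → ℕ) :
    seqW w (multiList α) = wlen w α := by
  unfold seqW multiList wlen
  rw [List.map_flatMap, List.flatMap_def, List.sum_flatten, List.map_map]
  rw [Fin.sum_univ_def]
  congr 1
  apply List.map_congr_left
  intro i _
  simp [Function.comp, List.map_replicate, List.sum_replicate, mul_comm, smul_eq_mul]

lemma cnt_cons (i : Fin n) (I : List (Fin n)) :
    (fun j => (i :: I).count j) = (fun j => I.count j) + Pi.single i 1 := by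
  funext j
  simp only [List.count_cons, Pi.add_apply, Pi.single_apply]
  rcases eq_or_ne j i with h | h
  · simp [h]
  · simp [h, Ne.symm h]

end Infra
section Infra2

variable {n : ℕ}

lemma seqW_cons (w : Fin n → ℕ) (i : Fin n) (I : List (Fin n)) :
    seqW w (i :: I) = w i + seqW w I := by simp [seqW]

lemma contDiffOn_vf {V : Set (Fin n → ℝ)} (hV : IsOpen V) {g : (Fin n → ℝ) → ℝ}
    (hg : ContDiffOn ℝ (⊤ : ℕ∞) g V) (i : Fin n) :
    ContDiffOn ℝ (⊤ : ℕ∞) (vf (cP n i) g) V := by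
  rw [vf_cP]
  exact (hg.fderiv_of_isOpen hV (by simp)).clm_apply contDiffOn_const

lemma contDiffOn_vfSeq {V : Set (Fin n → ℝ)} (hV : IsOpen V) {g : (Fin n → ℝ) → ℝ}
    (hg : ContDiffOn ℝ (⊤ : ℕ∞) g V) :
    ∀ I : List (Fin n), ContDiffOn ℝ (⊤ : ℕ∞) (vfSeq (cP n) I g) V
  | [] => hg
  | i :: I => by
    show ContDiffOn ℝ _ (vf (cP n i) (vfSeq (cP n) I g)) V
    exact contDiffOn_vf hV (contDiffOn_vfSeq hV hg I) i

lemma diffAt_vfSeq {V : Set (Fin n → ℝ)} (hV : IsOpen V) {g : (Fin n → ℝ) → ℝ}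
    (hg : ContDiffOn ℝ (⊤ : ℕ∞) g V) (I : List (Fin n)) {x : Fin n → ℝ} (hx : x ∈ V) :
    DifferentiableAt ℝ (vfSeq (cP n) I g) x :=
  ((contDiffOn_vfSeq hV hg I).differentiableOn
    (by simp)).differentiableAt (hV.mem_nhds hx)

lemma vfSeq_congr {V : Set (Fin n → ℝ)} (hV : IsOpen V) {g g' : (Fin n → ℝ) → ℝ}
    (h : Set.EqOn g g' V) :
    ∀ I : List (Fin n), Set.EqOn (vfSeq (cP n) I g) (vfSeq (cP n) I g') V
  | [] => h
  | i :: I => by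
    intro x hx
    have hev : vfSeq (cP n) I g =ᶠ[nhds x] vfSeq (cP n) I g' := by
      filter_upwards [hV.mem_nhds hx] using vfSeq_congr hV h I
    show fderiv ℝ (vfSeq (cP n) I g) x (Pi.single i 1)
        = fderiv ℝ (vfSeq (cP n) I g') x (Pi.single i 1)
    rw [hev.fderiv_eq]

lemma vfSeq_sub {V : Set (Fin n → ℝ)} (hV : IsOpen V) {a b : (Fin n → ℝ) → ℝ}
    (ha : ContDiffOn ℝ (⊤ : ℕ∞) a V) (hb : ContDiffOn ℝ (⊤ : ℕ∞) b V) :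
    ∀ I : List (Fin n), Set.EqOn (vfSeq (cP n) I (fun y => a y - b y))
      (fun x => vfSeq (cP n) I a x - vfSeq (cP n) I b x) V
  | [] => fun x _ => rfl
  | i :: I => by
    intro x hx
    have hev : vfSeq (cP n) I (fun y => a y - b y)
        =ᶠ[nhds x] fun y => vfSeq (cP n) I a y - vfSeq (cP n) I b y := by
      filter_upwards [hV.mem_nhds hx] using vfSeq_sub hV ha hb I
    show fderiv ℝ (vfSeq (cP n) I fun y => a y - b y) x (Pi.single i 1) = _
    rw [hev.fderiv_eq, fderiv_fun_sub (diffAt_vfSeq hV ha I hx) (diffAt_vfSeq hV hb I hx)]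
    rfl

lemma vfSeq_const_mul {V : Set (Fin n → ℝ)} (hV : IsOpen V) {a : (Fin n → ℝ) → ℝ}
    (ha : ContDiffOn ℝ (⊤ : ℕ∞) a V) (c : ℝ) :
    ∀ I : List (Fin n), Set.EqOn (vfSeq (cP n) I (fun y => c * a y))
      (fun x => c * vfSeq (cP n) I a x) V
  | [] => fun x _ => rfl
  | i :: I => by
    intro x hx
    have hev : vfSeq (cP n) I (fun y => c * a y)
        =ᶠ[nhds x] fun y => c * vfSeq (cP n) I a y := by
      filter_upwards [hV.mem_nhds hx] using vfSeq_const_mul hV ha c I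
    show fderiv ℝ (vfSeq (cP n) I fun y => c * a y) x (Pi.single i 1) = _
    rw [hev.fderiv_eq, fderiv_const_mul (diffAt_vfSeq hV ha I hx) c]
    rfl

lemma vfSeq_zero : ∀ I : List (Fin n), vfSeq (cP n) I (fun _ => (0:ℝ)) = fun _ => 0
  | [] => rfl
  | i :: I => by
    show vf (cP n i) (vfSeq (cP n) I fun _ => 0) = _
    rw [vfSeq_zero I, vf_cP]
    funext x
    simp

lemma vfSeq_add {V : Set (Fin n → ℝ)} (hV : IsOpen V) {a b : (Fin n → ℝ) → ℝ}
    (ha : ContDiffOn ℝ (⊤ : ℕ∞) a V) (hb : ContDiffOn ℝ (⊤ : ℕ∞) b V) :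
    ∀ I : List (Fin n), Set.EqOn (vfSeq (cP n) I (fun y => a y + b y))
      (fun x => vfSeq (cP n) I a x + vfSeq (cP n) I b x) V
  | [] => fun x _ => rfl
  | i :: I => by
    intro x hx
    have hev : vfSeq (cP n) I (fun y => a y + b y)
        =ᶠ[nhds x] fun y => vfSeq (cP n) I a y + vfSeq (cP n) I b y := by
      filter_upwards [hV.mem_nhds hx] using vfSeq_add hV ha hb I
    show fderiv ℝ (vfSeq (cP n) I fun y => a y + b y) x (Pi.single i 1) = _
    rw [hev.fderiv_eq, fderiv_fun_add (diffAt_vfSeq hV ha I hx) (diffAt_vfSeq hV hb I hx)]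
    rfl

lemma vf_swap {V : Set (Fin n → ℝ)} (hV : IsOpen V) {g : (Fin n → ℝ) → ℝ}
    (hg : ContDiffOn ℝ (⊤ : ℕ∞) g V) (i j : Fin n) :
    Set.EqOn (vf (cP n i) (vf (cP n j) g)) (vf (cP n j) (vf (cP n i) g)) V := by
  intro x hx
  have hgx : ContDiffAt ℝ (⊤ : ℕ∞) g x := hg.contDiffAt (hV.mem_nhds hx)
  have hd1 : DifferentiableAt ℝ (fderiv ℝ g) x := by
    have h2 := hgx.fderiv_right (m := 1) (by rw [one_add_one_eq_two, ← WithTop.coe_ofNat]; exact WithTop.coe_le_coe.2 le_top)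
    exact h2.differentiableAt one_ne_zero
  have hsym := (hgx.isSymmSndFDerivAt (by rw [minSmoothness_of_isRCLikeNormedField, ← WithTop.coe_ofNat]; exact WithTop.coe_le_coe.2 le_top)).eq
  show fderiv ℝ (fun y => fderiv ℝ g y (Pi.single j 1)) x (Pi.single i 1)
      = fderiv ℝ (fun y => fderiv ℝ g y (Pi.single i 1)) x (Pi.single j 1)
  rw [fderiv_clm_apply hd1 (differentiableAt_const _),
      fderiv_clm_apply hd1 (differentiableAt_const _)]
  simp only [fderiv_fun_const, Pi.zero_apply, ContinuousLinearMap.comp_zero, zero_add,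
    ContinuousLinearMap.add_apply, ContinuousLinearMap.flip_apply, ContinuousLinearMap.zero_apply]
  exact hsym _ _

lemma vfSeq_perm {V : Set (Fin n → ℝ)} (hV : IsOpen V) {g : (Fin n → ℝ) → ℝ}
    (hg : ContDiffOn ℝ (⊤ : ℕ∞) g V) {I J : List (Fin n)} (hIJ : I.Perm J) :
    Set.EqOn (vfSeq (cP n) I g) (vfSeq (cP n) J g) V := by
  induction hIJ with
  | nil => intro x _; rfl
  | @cons a l₁ l₂ h ih =>
    intro x hx
    have hev : vfSeq (cP n) l₁ g =ᶠ[nhds x] vfSeq (cP n) l₂ g := by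
      filter_upwards [hV.mem_nhds hx] using ih
    show fderiv ℝ (vfSeq (cP n) l₁ g) x (Pi.single a 1)
        = fderiv ℝ (vfSeq (cP n) l₂ g) x (Pi.single a 1)
    rw [hev.fderiv_eq]
  | swap a b l => exact vf_swap hV (contDiffOn_vfSeq hV hg l) b a
  | trans h1 h2 ih1 ih2 => exact fun x hx => (ih1 hx).trans (ih2 hx)

end Infra2
section Infra3

variable {n : ℕ}

/-- The dilation as a continuous linear map. -/
noncomputable def dilL (w : Fin n → ℕ) (t : ℝ) : (Fin n → ℝ) →L[ℝ] (Fin n → ℝ) :=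
  ContinuousLinearMap.pi fun i => (t ^ w i) • ContinuousLinearMap.proj i

lemma dilL_apply (w : Fin n → ℕ) (t : ℝ) (x : Fin n → ℝ) : dilL w t x = dil w t x := rfl

lemma dil_continuous (w : Fin n → ℕ) (t : ℝ) : Continuous (fun y => dil w t y) :=
  (dilL w t).continuous

lemma dilL_single (w : Fin n → ℕ) (t : ℝ) (i : Fin n) :
    dilL w t (Pi.single i 1) = (t ^ w i) • (Pi.single i 1 : Fin n → ℝ) := by
  funext j
  show t ^ w j * ((Pi.single i 1 : Fin n → ℝ) j) = t ^ w i • ((Pi.single i 1 : Fin n → ℝ) j)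
  rw [smul_eq_mul]
  rcases eq_or_ne j i with h | h
  · subst h; rfl
  · simp [Pi.single_apply, h]

lemma dil_zero (w : Fin n → ℕ) (t : ℝ) : dil w t 0 = 0 := by
  funext i; simp [dil]

lemma dil_at_zero {w : Fin n → ℕ} (hw1 : ∀ i, 1 ≤ w i) (x : Fin n → ℝ) :
    dil w 0 x = 0 := by
  funext i
  have : w i ≠ 0 := by have := hw1 i; omega
  simp [dil, zero_pow this]

lemma contDiffOn_comp_dil {w : Fin n → ℕ} {V : Set (Fin n → ℝ)} {g : (Fin n → ℝ) → ℝ}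
    (hg : ContDiffOn ℝ (⊤ : ℕ∞) g V) (t : ℝ) :
    ContDiffOn ℝ (⊤ : ℕ∞) (fun y => g (dil w t y)) ((fun y => dil w t y) ⁻¹' V) :=
  hg.comp ((dilL w t).contDiff.contDiffOn) fun _ hy => hy

lemma vfSeq_dil {w : Fin n → ℕ} {V : Set (Fin n → ℝ)} (hV : IsOpen V) {g : (Fin n → ℝ) → ℝ}
    (hg : ContDiffOn ℝ (⊤ : ℕ∞) g V) (t : ℝ) :
    ∀ I : List (Fin n), ∀ x : Fin n → ℝ, dil w t x ∈ V →
      vfSeq (cP n) I (fun y => g (dil w t y)) x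
        = t ^ seqW w I * vfSeq (cP n) I g (dil w t x)
  | [] => by intro x hx; show g (dil w t x) = t ^ seqW w [] * g (dil w t x); simp [seqW]
  | i :: I => by
    intro x hx
    have hVt : IsOpen ((fun y => dil w t y) ⁻¹' V) := hV.preimage (dil_continuous w t)
    have hev : vfSeq (cP n) I (fun y => g (dil w t y))
        =ᶠ[nhds x] fun y => t ^ seqW w I * vfSeq (cP n) I g (dil w t y) := by
      filter_upwards [hVt.mem_nhds hx] with y hy using vfSeq_dil hV hg t I y hy
    have hdiff : DifferentiableAt ℝ (vfSeq (cP n) I g) (dil w t x) := diffAt_vfSeq hV hg I hx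
    have hcomp : DifferentiableAt ℝ (fun y => vfSeq (cP n) I g (dil w t y)) x :=
      hdiff.comp x (dilL w t).differentiableAt
    have hfd0 : HasFDerivAt (fun y => vfSeq (cP n) I g (dil w t y))
        ((fderiv ℝ (vfSeq (cP n) I g) (dil w t x)).comp (dilL w t)) x :=
      hdiff.hasFDerivAt.comp x (dilL w t).hasFDerivAt
    have hfd : fderiv ℝ (fun y => vfSeq (cP n) I g (dil w t y)) x
        = (fderiv ℝ (vfSeq (cP n) I g) (dil w t x)).comp (dilL w t) := hfd0.fderiv
    show fderiv ℝ (vfSeq (cP n) I fun y => g (dil w t y)) x (Pi.single i 1)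
        = t ^ seqW w (i :: I) * fderiv ℝ (vfSeq (cP n) I g) (dil w t x) (Pi.single i 1)
    rw [hev.fderiv_eq, fderiv_const_mul hcomp, hfd]
    rw [ContinuousLinearMap.smul_apply, ContinuousLinearMap.comp_apply, dilL_single,
        ContinuousLinearMap.map_smul, seqW_cons, pow_add]
    simp only [smul_eq_mul]
    ring

lemma contDiff_monom (α : Fin n → ℕ) : ContDiff ℝ (⊤ : ℕ∞) (monom α) := by
  classical
  have : ∀ s : Finset (Fin n), ContDiff ℝ (⊤ : ℕ∞) (fun x : Fin n → ℝ => ∏ i ∈ s, x i ^ α i) := by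
    intro s
    induction s using Finset.induction_on with
    | empty => simpa using contDiff_const
    | insert a s' hns ih =>
      have ha : ContDiff ℝ (⊤ : ℕ∞) (fun x : Fin n → ℝ => x a ^ α a) :=
        (ContinuousLinearMap.proj a : (Fin n → ℝ) →L[ℝ] ℝ).contDiff.pow (α a)
      simpa [Finset.prod_insert hns] using ha.mul ih
  exact this Finset.univ

lemma vf_monom (i : Fin n) (α : Fin n → ℕ) :
    vf (cP n i) (monom α) = fun x => (α i : ℝ) * monom (α - Pi.single i 1) x := by
  funext x
  have hline : HasDerivAt (fun s : ℝ => x + s • (Pi.single i 1 : Fin n → ℝ)) (Pi.single i 1) 0 := by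
    simpa using ((hasDerivAt_id (0:ℝ)).smul_const ((Pi.single i 1 : Fin n → ℝ))).const_add x
  have hdm : DifferentiableAt ℝ (monom α) x :=
    (contDiff_monom α).differentiable (by simp) x
  have h1 : HasDerivAt (fun s : ℝ => monom α (x + s • (Pi.single i 1 : Fin n → ℝ)))
      (fderiv ℝ (monom α) x (Pi.single i 1)) 0 := by
    have hdm' : HasFDerivAt (monom α) (fderiv ℝ (monom α) x)
        (x + (0:ℝ) • (Pi.single i 1 : Fin n → ℝ)) := by
      simpa using hdm.hasFDerivAt
    have := hdm'.comp_hasDerivAt (0:ℝ) hline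
    exact this
  have key : ∀ s : ℝ, monom α (x + s • (Pi.single i 1 : Fin n → ℝ))
      = (x i + s) ^ α i * ∏ j ∈ Finset.univ.erase i, x j ^ α j := by
    intro s
    unfold monom
    rw [← Finset.mul_prod_erase Finset.univ _ (Finset.mem_univ i)]
    congr 1
    · simp
    · apply Finset.prod_congr rfl
      intro j hj
      have hji : j ≠ i := Finset.ne_of_mem_erase hj
      simp [Pi.single_apply, hji]
  have h2 : HasDerivAt (fun s : ℝ => monom α (x + s • (Pi.single i 1 : Fin n → ℝ)))
      ((α i : ℝ) * x i ^ (α i - 1) * ∏ j ∈ Finset.univ.erase i, x j ^ α j) 0 := by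
    have hb : HasDerivAt (fun s : ℝ => (x i + s) ^ α i)
        ((α i : ℝ) * (x i + 0) ^ (α i - 1) * 1) 0 := ((hasDerivAt_id (0:ℝ)).const_add (x i)).pow (α i)
    have := hb.mul_const (∏ j ∈ Finset.univ.erase i, x j ^ α j)
    simp only [add_zero, mul_one] at this
    have heq : (fun s : ℝ => (x i + s) ^ α i * ∏ j ∈ Finset.univ.erase i, x j ^ α j)
        = fun s : ℝ => monom α (x + s • (Pi.single i 1 : Fin n → ℝ)) := by
      funext s; rw [key s]
    rwa [heq] at this
  have := h1.unique h2
  show fderiv ℝ (monom α) x (Pi.single i 1) = _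
  rw [this]
  have : monom (α - Pi.single i 1) x = x i ^ (α i - 1) * ∏ j ∈ Finset.univ.erase i, x j ^ α j := by
    unfold monom
    rw [← Finset.mul_prod_erase Finset.univ _ (Finset.mem_univ i)]
    congr 1
    · simp
    · apply Finset.prod_congr rfl
      intro j hj
      have hji : j ≠ i := Finset.ne_of_mem_erase hj
      simp [Pi.single_apply, hji]
  rw [this]
  ring

end Infra3
section Infra4

variable {n : ℕ}

lemma vfSeq_monom : ∀ (I : List (Fin n)) (α : Fin n → ℕ),
    vfSeq (cP n) I (monom α) = fun x =>
      ((∏ j, (α j).descFactorial (I.count j) : ℕ) : ℝ)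
        * monom (α - fun j => I.count j) x
  | [], α => by
    funext x
    show monom α x = _
    have h0 : (α - fun _ => (0:ℕ)) = α := by
      funext j; simp
    simp [h0]
  | i :: I, α => by
    funext x
    show vf (cP n i) (vfSeq (cP n) I (monom α)) x = _
    rw [vfSeq_monom I α]
    set C := ((∏ j, (α j).descFactorial (I.count j) : ℕ) : ℝ) with hC
    set γ := α - fun j => I.count j with hγ
    have hd : DifferentiableAt ℝ (monom γ) x :=
      (contDiff_monom γ).differentiable (by simp) x
    have h1 : vf (cP n i) (fun y => C * monom γ y) x
        = C * ((γ i : ℝ) * monom (γ - Pi.single i 1) x) := by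
      show fderiv ℝ (fun y => C * monom γ y) x (Pi.single i 1) = _
      rw [fderiv_const_mul hd C, ContinuousLinearMap.smul_apply, smul_eq_mul]
      have h2 := congrFun (vf_monom i γ) x
      rw [show fderiv ℝ (monom γ) x (Pi.single i 1) = vf (cP n i) (monom γ) x from rfl, h2]
    rw [h1]
    have hidx : γ - Pi.single i 1 = α - fun j => (i :: I).count j := by
      funext j
      show α j - I.count j - (Pi.single i 1 : Fin n → ℕ) j = α j - (i :: I).count j
      rcases eq_or_ne j i with h | h
      · subst h
        rw [List.count_cons_self, Pi.single_eq_same, Nat.sub_sub]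
      · rw [List.count_cons_of_ne (by exact_mod_cast Ne.symm h), Pi.single_eq_of_ne h, Nat.sub_zero]
    have hcoefN : (α i - I.count i) * ∏ j, (α j).descFactorial (I.count j)
        = ∏ j, (α j).descFactorial ((i :: I).count j) := by
      rw [← Finset.mul_prod_erase Finset.univ
            (fun j => (α j).descFactorial ((i :: I).count j)) (Finset.mem_univ i),
          ← Finset.mul_prod_erase Finset.univ
            (fun j => (α j).descFactorial (I.count j)) (Finset.mem_univ i), ← mul_assoc]
      congr 1
      · rw [List.count_cons_self, Nat.descFactorial_succ]
      · apply Finset.prod_congr rfl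
        intro j hj
        rw [List.count_cons_of_ne (by exact_mod_cast Ne.symm (Finset.ne_of_mem_erase hj))]
    have hγi : γ i = α i - I.count i := rfl
    rw [hidx, hC, ← mul_assoc, hγi, ← Nat.cast_mul,
      mul_comm (∏ j, (α j).descFactorial (I.count j)) (α i - I.count i), hcoefN]

lemma monom_zero_eq (α : Fin n → ℕ) : monom α 0 = if α = 0 then 1 else 0 := by
  unfold monom
  rcases eq_or_ne α 0 with h | h
  · subst h; simp
  · obtain ⟨i, hi⟩ : ∃ i, α i ≠ 0 := by
      by_contra hc; push_neg at hc; exact h (funext hc)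
    rw [if_neg h]
    apply Finset.prod_eq_zero (Finset.mem_univ i)
    simp [zero_pow hi]

lemma pdPow_monom_zero (β α : Fin n → ℕ) :
    pdPow β (monom α) 0 = if β = α then ((∏ i, (α i).factorial : ℕ) : ℝ) else 0 := by
  rw [pdPow_def, vfSeq_monom]
  simp only [count_multiList]
  rcases eq_or_ne β α with h | h
  · rw [if_pos h, h]
    have hz : α - (fun j => α j) = 0 := by funext j; exact Nat.sub_self (α j)
    rw [hz, monom_zero_eq, if_pos rfl, mul_one]
    congr 1
    exact Finset.prod_congr rfl fun j _ => Nat.descFactorial_self (α j)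
  · rw [if_neg h]
    by_cases hle : ∀ i, β i ≤ α i
    · have hne : α - (fun j => β j) ≠ 0 := by
        obtain ⟨i, hi⟩ : ∃ i, β i ≠ α i := by
          by_contra hc; push_neg at hc; exact h (funext hc)
        intro hz
        have := congrFun hz i
        have : α i - β i = 0 := this
        have := hle i
        omega
      rw [monom_zero_eq, if_neg hne, mul_zero]
    · push_neg at hle
      obtain ⟨i, hi⟩ := hle
      have : (α i).descFactorial (β i) = 0 :=
        Nat.descFactorial_eq_zero_iff_lt.2 hi
      rw [show (∏ j, (α j).descFactorial (β j)) = 0 from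
        Finset.prod_eq_zero (Finset.mem_univ i) this, Nat.cast_zero, zero_mul]

lemma contDiff_finsum {ι : Type} (s : Finset ι) (F : ι → (Fin n → ℝ) → ℝ)
    (hF : ∀ a ∈ s, ContDiff ℝ (⊤ : ℕ∞) (F a)) :
    ContDiff ℝ (⊤ : ℕ∞) (fun y => ∑ a ∈ s, F a y) := by
  classical
  induction s using Finset.induction_on with
  | empty => simpa using contDiff_const
  | insert a s' hns ih =>
    have h1 := hF a (Finset.mem_insert_self a s')
    have h2 := ih fun b hb => hF b (Finset.mem_insert_of_mem hb)
    simpa [Finset.sum_insert hns] using h1.add h2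

lemma vfSeq_finsum {ι : Type} (s : Finset ι) (F : ι → (Fin n → ℝ) → ℝ)
    (hF : ∀ a ∈ s, ContDiff ℝ (⊤ : ℕ∞) (F a)) (I : List (Fin n)) :
    vfSeq (cP n) I (fun y => ∑ a ∈ s, F a y) = fun x => ∑ a ∈ s, vfSeq (cP n) I (F a) x := by
  classical
  induction s using Finset.induction_on with
  | empty =>
    simp only [Finset.sum_empty]
    exact vfSeq_zero I
  | insert a s' hns ih =>
    have h1 := hF a (Finset.mem_insert_self a s')
    have h2 := contDiff_finsum s' F fun b hb => hF b (Finset.mem_insert_of_mem hb)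
    have ih' := ih fun b hb => hF b (Finset.mem_insert_of_mem hb)
    funext x
    have hadd := vfSeq_add (V := Set.univ) isOpen_univ
      (contDiffOn_univ.2 h1) (contDiffOn_univ.2 h2) I (Set.mem_univ x)
    simp only [Finset.sum_insert hns]
    have : vfSeq (cP n) I (fun y => F a y + ∑ b ∈ s', F b y) x
        = vfSeq (cP n) I (F a) x + vfSeq (cP n) I (fun y => ∑ b ∈ s', F b y) x := hadd
    rw [this, ih']

lemma monom_dil (w : Fin n → ℕ) (t : ℝ) (α : Fin n → ℕ) (x : Fin n → ℝ) :
    monom α (dil w t x) = t ^ wlen w α * monom α x := by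
  unfold monom dil wlen
  rw [← Finset.prod_pow_eq_pow_sum, ← Finset.prod_mul_distrib]
  apply Finset.prod_congr rfl
  intro i _
  rw [mul_pow, ← pow_mul]

end Infra4
section Infra5

variable {n : ℕ}

lemma norm_dil_le {w : Fin n → ℕ} (hw1 : ∀ i, 1 ≤ w i) {t : ℝ} (ht : |t| ≤ 1)
    (x : Fin n → ℝ) : ‖dil w t x‖ ≤ |t| * ‖x‖ := by
  have h0 : (0:ℝ) ≤ |t| * ‖x‖ := mul_nonneg (abs_nonneg t) (norm_nonneg x)
  rw [pi_norm_le_iff_of_nonneg h0]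
  intro i
  show ‖t ^ w i * x i‖ ≤ |t| * ‖x‖
  rw [norm_mul, norm_pow, Real.norm_eq_abs]
  have h1 : |t| ^ w i ≤ |t| ^ 1 := pow_le_pow_of_le_one (abs_nonneg t) ht (hw1 i)
  calc |t| ^ w i * ‖x i‖ ≤ |t| ^ 1 * ‖x‖ :=
        mul_le_mul h1 (norm_le_pi_norm x i) (norm_nonneg _) (by positivity)
    _ = |t| * ‖x‖ := by rw [pow_one]

lemma dil_small {w : Fin n → ℕ} (hw1 : ∀ i, 1 ≤ w i) {K : Set (Fin n → ℝ)}
    (hK : IsCompact K) {r : ℝ} (hr : 0 < r) :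
    ∃ t₀ : ℝ, 0 < t₀ ∧ t₀ ≤ 1 ∧ ∀ t : ℝ, |t| ≤ t₀ → ∀ x ∈ K, ‖dil w t x‖ ≤ r := by
  obtain ⟨R, hR, hRK⟩ := hK.isBounded.exists_pos_norm_le
  refine ⟨min 1 (r / R), lt_min one_pos (by positivity), min_le_left _ _, ?_⟩
  intro t ht x hx
  have h1 : |t| ≤ 1 := le_trans ht (min_le_left _ _)
  calc ‖dil w t x‖ ≤ |t| * ‖x‖ := norm_dil_le hw1 h1 x
    _ ≤ (r / R) * R :=
        mul_le_mul (le_trans ht (min_le_right _ _)) (hRK x hx) (norm_nonneg _) (by positivity)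
    _ = r := by field_simp

lemma exists_closedBall_subset {U : Set (Fin n → ℝ)} (hU : IsOpen U)
    (h0 : (0 : Fin n → ℝ) ∈ U) : ∃ r : ℝ, 0 < r ∧ Metric.closedBall 0 r ⊆ U := by
  obtain ⟨r, hr, hball⟩ := Metric.isOpen_iff.1 hU 0 h0
  exact ⟨r / 2, by positivity, fun y hy =>
    hball (lt_of_le_of_lt (Metric.mem_closedBall.1 hy) (by linarith))⟩

lemma abs_le_abs_of_uIcc {s t : ℝ} (h : s ∈ Set.uIcc 0 t) : |s| ≤ |t| := by
  rcases Set.mem_uIcc.1 h with ⟨h1, h2⟩ | ⟨h1, h2⟩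
  · rw [abs_of_nonneg h1]; exact le_trans h2 (le_abs_self t)
  · rw [abs_of_nonpos h2]
    calc -s ≤ -t := neg_le_neg h1
      _ ≤ |t| := neg_le_abs t

lemma pi_single_sum (u : Fin n → ℝ) : u = ∑ i, u i • (Pi.single i 1 : Fin n → ℝ) := by
  funext j
  rw [Finset.sum_apply]
  have h : ∀ i, (u i • (Pi.single i 1 : Fin n → ℝ)) j = if i = j then u i else 0 := by
    intro i
    rcases eq_or_ne i j with h | h
    · subst h; simp
    · simp [Pi.single_apply, Ne.symm h, h]
  simp only [h]
  simp

lemma core_claim {w : Fin n → ℕ} (hn : 0 < n) (hw1 : ∀ i, 1 ≤ w i)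
    {U : Set (Fin n → ℝ)} (hU : IsOpen U) (h0 : (0 : Fin n → ℝ) ∈ U)
    {K : Set (Fin n → ℝ)} (hK : IsCompact K) :
    ∀ M : ℕ, ∀ R : (Fin n → ℝ) → ℝ, ContDiffOn ℝ (⊤ : ℕ∞) R U →
      (∀ I : List (Fin n), seqW w I < M → vfSeq (cP n) I R 0 = 0) →
      ∃ C : ℝ, 0 < C ∧ ∃ t₀ : ℝ, 0 < t₀ ∧ t₀ ≤ 1 ∧
        ∀ t : ℝ, |t| ≤ t₀ → ∀ x ∈ K, |R (dil w t x)| ≤ C * |t| ^ M := by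
  intro M
  induction M using Nat.strong_induction_on with
  | _ M ih =>
  obtain ⟨r, hr, hrU⟩ := exists_closedBall_subset hU h0
  obtain ⟨tu, htu0, htu1, htub⟩ := dil_small hw1 hK hr
  match M with
  | 0 =>
    intro R hR hvan
    obtain ⟨C, hC⟩ := (isCompact_closedBall (0 : Fin n → ℝ) r).exists_bound_of_continuousOn
      (hR.continuousOn.mono hrU)
    refine ⟨max C 1, lt_of_lt_of_le one_pos (le_max_right _ _), tu, htu0, htu1, ?_⟩
    intro t ht x hx
    have hmem : dil w t x ∈ Metric.closedBall (0 : Fin n → ℝ) r := by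
      rw [Metric.mem_closedBall, dist_zero_right]
      exact htub t ht x hx
    have := hC _ hmem
    rw [pow_zero, mul_one]
    exact le_trans this (le_max_left _ _)
  | M + 1 =>
    intro R hR hvan
    obtain ⟨RK, hRK0, hRKb⟩ := hK.isBounded.exists_pos_norm_le
    -- set up the component estimates
    have hcomp : ∀ i : Fin n, ∃ C : ℝ, 0 < C ∧ ∃ t₀ : ℝ, 0 < t₀ ∧ t₀ ≤ 1 ∧
        ∀ t : ℝ, |t| ≤ t₀ → ∀ x ∈ K,
          |vfSeq (cP n) [i] R (dil w t x)| ≤ C * |t| ^ (M + 1 - w i) := by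
      intro i
      apply ih (M + 1 - w i) (by have := hw1 i; omega)
      · exact contDiffOn_vfSeq hU hR [i]
      · intro I hI
        rw [← vfSeq_append]
        apply hvan
        rw [seqW_append]
        have h1 : seqW w [i] = w i := by simp [seqW]
        rw [h1]
        omega
    choose Cf hCf0 tf htf0 htf1 hbd using hcomp
    have _inst : Nonempty (Fin n) := Fin.pos_iff_nonempty.1 hn
    have hne : (Finset.univ : Finset (Fin n)).Nonempty := Finset.univ_nonempty
    set T : ℝ := Finset.univ.inf' hne tf with hT
    have hT0 : 0 < T := (Finset.lt_inf'_iff hne).2 fun i _ => htf0 i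
    have hTle : ∀ i, T ≤ tf i := fun i => Finset.inf'_le tf (Finset.mem_univ i)
    set t₀ : ℝ := min T tu with ht₀def
    have ht₀0 : 0 < t₀ := lt_min hT0 htu0
    have ht₀1 : t₀ ≤ 1 := le_trans (min_le_right _ _) htu1
    set C' : ℝ := (∑ i, (w i : ℝ) * RK * Cf i) + 1 with hC'
    have hC'0 : 0 < C' := by
      have : (0:ℝ) ≤ ∑ i, (w i : ℝ) * RK * Cf i :=
        Finset.sum_nonneg fun i _ => by
          have := hCf0 i
          have := hRK0
          positivity
      linarith
    refine ⟨C', hC'0, t₀, ht₀0, ht₀1, ?_⟩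
    intro t ht x hx
    have htle1 : |t| ≤ 1 := le_trans ht ht₀1
    -- the curve and its derivative
    set c : ℝ → (Fin n → ℝ) := fun s => dil w s x with hc
    set v : ℝ → (Fin n → ℝ) := fun s => fun i => (w i : ℝ) * s ^ (w i - 1) * x i with hv
    have hcmem : ∀ s ∈ Set.uIcc (0:ℝ) t, c s ∈ U := by
      intro s hs
      apply hrU
      rw [Metric.mem_closedBall, dist_zero_right]
      exact htub s (le_trans (abs_le_abs_of_uIcc hs)
        (le_trans ht (min_le_right _ _))) x hx
    have hderiv : ∀ s ∈ Set.uIcc (0:ℝ) t, HasDerivAt (fun u => R (c u))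
        (fderiv ℝ R (c s) (v s)) s := by
      intro s hs
      have hcd : HasDerivAt c (v s) s := by
        rw [hasDerivAt_pi]
        intro i
        have h1 : HasDerivAt (fun u : ℝ => u ^ w i) ((w i : ℝ) * s ^ (w i - 1)) s :=
          hasDerivAt_pow (w i) s
        simpa [hc, dil, hv] using h1.mul_const (x i)
      have hRd : DifferentiableAt ℝ R (c s) :=
        ((hR.differentiableOn (by simp)).differentiableAt
          (hU.mem_nhds (hcmem s hs)))
      exact hRd.hasFDerivAt.comp_hasDerivAt s hcd
    -- bound the derivative
    have hdbound : ∀ s ∈ Set.uIcc (0:ℝ) t,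
        ‖fderiv ℝ R (c s) (v s)‖ ≤ (∑ i, (w i : ℝ) * RK * Cf i) * |t| ^ M := by
      intro s hs
      have hst : |s| ≤ |t| := abs_le_abs_of_uIcc hs
      have hs1 : |s| ≤ 1 := le_trans hst htle1
      have hexp : ∀ i : Fin n, |s| ^ (w i - 1) * |s| ^ (M + 1 - w i) ≤ |t| ^ M := by
        intro i
        rw [← pow_add]
        calc |s| ^ (w i - 1 + (M + 1 - w i)) ≤ |s| ^ M :=
              pow_le_pow_of_le_one (abs_nonneg s) hs1 (by have := hw1 i; omega)
          _ ≤ |t| ^ M := pow_le_pow_left₀ (abs_nonneg s) hst M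
      have hexpand : fderiv ℝ R (c s) (v s)
          = ∑ i, v s i * fderiv ℝ R (c s) (Pi.single i 1) := by
        conv_lhs => rw [pi_single_sum (v s)]
        rw [map_sum]
        apply Finset.sum_congr rfl
        intro i _
        rw [ContinuousLinearMap.map_smul, smul_eq_mul]
      rw [hexpand, Real.norm_eq_abs]
      calc |∑ i, v s i * fderiv ℝ R (c s) (Pi.single i 1)|
          ≤ ∑ i, |v s i * fderiv ℝ R (c s) (Pi.single i 1)| :=
            Finset.abs_sum_le_sum_abs _ _
        _ ≤ ∑ i, (w i : ℝ) * RK * Cf i * |t| ^ M := by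
            apply Finset.sum_le_sum
            intro i _
            rw [abs_mul]
            have hvb : |v s i| ≤ (w i : ℝ) * RK * |s| ^ (w i - 1) := by
              rw [hv]
              show |(w i : ℝ) * s ^ (w i - 1) * x i| ≤ _
              rw [abs_mul, abs_mul, abs_pow]
              have hxi : |x i| ≤ RK := le_trans (norm_le_pi_norm x i) (hRKb x hx)
              have : |(w i : ℝ)| = (w i : ℝ) := abs_of_nonneg (by positivity)
              rw [this]
              calc (w i : ℝ) * |s| ^ (w i - 1) * |x i|
                  ≤ (w i : ℝ) * |s| ^ (w i - 1) * RK := by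
                    apply mul_le_mul_of_nonneg_left hxi (by positivity)
                _ = (w i : ℝ) * RK * |s| ^ (w i - 1) := by ring
            have hfb : |fderiv ℝ R (c s) (Pi.single i 1)| ≤ Cf i * |s| ^ (M + 1 - w i) := by
              have := hbd i s (le_trans hst (le_trans ht (le_trans (min_le_left _ _) (hTle i)))) x hx
              exact this
            calc |v s i| * |fderiv ℝ R (c s) (Pi.single i 1)|
                ≤ ((w i : ℝ) * RK * |s| ^ (w i - 1)) * (Cf i * |s| ^ (M + 1 - w i)) := by
                  apply mul_le_mul hvb hfb (abs_nonneg _) (by positivity)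
              _ = (w i : ℝ) * RK * Cf i * (|s| ^ (w i - 1) * |s| ^ (M + 1 - w i)) := by ring
              _ ≤ (w i : ℝ) * RK * Cf i * |t| ^ M := by
                  apply mul_le_mul_of_nonneg_left (hexp i)
                  have := hCf0 i
                  positivity
        _ = (∑ i, (w i : ℝ) * RK * Cf i) * |t| ^ M := by rw [Finset.sum_mul]
    -- mean value inequality
    have hmvt := Convex.norm_image_sub_le_of_norm_hasDerivWithin_le
      (f := fun u => R (c u)) (f' := fun s => fderiv ℝ R (c s) (v s))
      (fun s hs => (hderiv s hs).hasDerivWithinAt)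
      (fun s hs => hdbound s hs)
      (convex_uIcc 0 t) (Set.left_mem_uIcc) (Set.right_mem_uIcc)
    have h1 : c 0 = 0 := dil_at_zero hw1 x
    have hs0 : seqW w ([] : List (Fin n)) = 0 := by simp [seqW]
    have hR0 : R (c 0) = 0 := by rw [h1]; exact hvan [] (by omega)
    have hmvt' : |R (dil w t x)| ≤ (∑ i, (w i : ℝ) * RK * Cf i) * |t| ^ M * |t| := by
      calc |R (dil w t x)| = ‖(fun u => R (c u)) t - (fun u => R (c u)) 0‖ := by
            show |R (dil w t x)| = ‖R (c t) - R (c 0)‖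
            rw [hR0, sub_zero, Real.norm_eq_abs]
        _ ≤ (∑ i, (w i : ℝ) * RK * Cf i) * |t| ^ M * ‖t - 0‖ := hmvt
        _ = (∑ i, (w i : ℝ) * RK * Cf i) * |t| ^ M * |t| := by
            rw [sub_zero, Real.norm_eq_abs]
    calc |R (dil w t x)| ≤ (∑ i, (w i : ℝ) * RK * Cf i) * |t| ^ M * |t| := hmvt'
      _ ≤ C' * |t| ^ (M + 1) := by
          rw [hC', pow_succ]
          have h1 : (0:ℝ) ≤ |t| ^ M * |t| := by positivity
          have h2 : (0:ℝ) ≤ ∑ i, (w i : ℝ) * RK * Cf i :=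
            Finset.sum_nonneg fun i _ => by have := hCf0 i; positivity
          nlinarith [abs_nonneg t]

end Infra5
section Infra6

variable {n : ℕ}

lemma mem_mIdx {B : ℕ} {α : Fin n → ℕ} : α ∈ mIdx n B ↔ ∀ i, α i < B := by
  simp [mIdx, Fintype.mem_piFinset, Finset.mem_range]

lemma mem_mIdx_of_wlen {w : Fin n → ℕ} (hw1 : ∀ i, 1 ≤ w i) {N : ℕ} {α : Fin n → ℕ}
    (h : wlen w α ≤ N) : α ∈ mIdx n (N + 1) := by
  rw [mem_mIdx]
  intro i
  have h1 : α i ≤ w i * α i := by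
    calc α i = 1 * α i := (one_mul _).symm
      _ ≤ w i * α i := Nat.mul_le_mul_right (α i) (hw1 i)
  have h2 : w i * α i ≤ wlen w α :=
    Finset.single_le_sum (f := fun j => w j * α j) (fun j _ => Nat.zero_le _) (Finset.mem_univ i)
  omega

lemma contDiff_term (c : ℝ) (α : Fin n → ℕ) :
    ContDiff ℝ (⊤ : ℕ∞) (fun y : Fin n → ℝ => c * monom α y) :=
  contDiff_const.mul (contDiff_monom α)

lemma taylorCoeff_mul_fact (γ : Fin n → ℕ) (f : (Fin n → ℝ) → ℝ) :
    taylorCoeff γ f * ((∏ i, (γ i).factorial : ℕ) : ℝ) = pdPow γ f 0 := by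
  unfold taylorCoeff
  have hpos : (0:ℕ) < ∏ i, (γ i).factorial :=
    Finset.prod_pos fun i _ => (γ i).factorial_pos
  have h : ((∏ i, (γ i).factorial : ℕ) : ℝ) ≠ 0 := Nat.cast_ne_zero.2 hpos.ne'
  rw [mul_comm, ← mul_assoc, mul_inv_cancel₀ h, one_mul]

lemma pdPow_sum_monoms (γ : Fin n → ℕ) (S : Finset (Fin n → ℕ)) (c : (Fin n → ℕ) → ℝ) :
    pdPow γ (fun x => ∑ α ∈ S, c α * monom α x) 0
      = if γ ∈ S then c γ * ((∏ i, (γ i).factorial : ℕ) : ℝ) else 0 := by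
  rw [pdPow_def, vfSeq_finsum S (fun α => fun y => c α * monom α y)
    (fun a _ => contDiff_term (c a) a) (multiList γ)]
  have hterm : ∀ α ∈ S, vfSeq (cP n) (multiList γ) (fun y => c α * monom α y) 0
      = c α * pdPow γ (monom α) 0 := fun α _ =>
    vfSeq_const_mul isOpen_univ (contDiff_monom α).contDiffOn (c α) (multiList γ)
      (Set.mem_univ 0)
  show (∑ a ∈ S, vfSeq (cP n) (multiList γ) (fun y => c a * monom a y) 0) = _
  rw [Finset.sum_congr rfl hterm]
  by_cases hγ : γ ∈ S
  · rw [if_pos hγ, Finset.sum_eq_single_of_mem γ hγ]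
    · rw [pdPow_monom_zero, if_pos rfl]
    · intro b _ hbne
      rw [pdPow_monom_zero, if_neg (Ne.symm hbne), mul_zero]
  · rw [if_neg hγ]
    apply Finset.sum_eq_zero
    intro α hα
    rw [pdPow_monom_zero, if_neg (by rintro rfl; exact hγ hα), mul_zero]

lemma pdPow_homPart_zero {w : Fin n → ℕ} (hw1 : ∀ i, 1 ≤ w i) (f : (Fin n → ℝ) → ℝ)
    (N : ℕ) (γ : Fin n → ℕ) :
    pdPow γ (homPart w f N) 0 = if wlen w γ = N then pdPow γ f 0 else 0 := by
  have h := pdPow_sum_monoms γ ((mIdx n (N+1)).filter (fun α => wlen w α = N))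
    (fun α => taylorCoeff α f)
  rw [show homPart w f N = fun x => ∑ α ∈ (mIdx n (N+1)).filter (fun α => wlen w α = N),
      taylorCoeff α f * monom α x from rfl]
  rw [h]
  rcases eq_or_ne (wlen w γ) N with hl | hl
  · rw [if_pos hl, if_pos (Finset.mem_filter.2 ⟨mem_mIdx_of_wlen hw1 (le_of_eq hl), hl⟩),
      taylorCoeff_mul_fact]
  · have h2 : γ ∉ Finset.filter (fun α => wlen w α = N) (mIdx n (N+1)) :=
      fun hmem => hl (Finset.mem_filter.1 hmem).2
    rw [if_neg h2, if_neg hl]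

lemma contDiff_homPart (w : Fin n → ℕ) (f : (Fin n → ℝ) → ℝ) (N : ℕ) :
    ContDiff ℝ (⊤ : ℕ∞) (homPart w f N) :=
  contDiff_finsum _ (fun α => fun y => taylorCoeff α f * monom α y)
    (fun a _ => contDiff_term _ _)

lemma homPart_dil (w : Fin n → ℕ) (f : (Fin n → ℝ) → ℝ) (N : ℕ) (t : ℝ) (x : Fin n → ℝ) :
    homPart w f N (dil w t x) = t ^ N * homPart w f N x := by
  show (∑ α ∈ _, taylorCoeff α f * monom α (dil w t x)) = t ^ N * ∑ α ∈ _, _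
  rw [Finset.mul_sum]
  apply Finset.sum_congr rfl
  intro α hα
  have hl : wlen w α = N := (Finset.mem_filter.1 hα).2
  rw [monom_dil, hl]
  ring

lemma vfSeq_eq_pdPow_zero {V : Set (Fin n → ℝ)} (hV : IsOpen V)
    (h0 : (0 : Fin n → ℝ) ∈ V) {g : (Fin n → ℝ) → ℝ} (hg : ContDiffOn ℝ (⊤ : ℕ∞) g V)
    (I : List (Fin n)) : vfSeq (cP n) I g 0 = pdPow (fun i => I.count i) g 0 := by
  rw [pdPow_def]
  exact vfSeq_perm hV hg (perm_multiList I) h0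

lemma wlen_count (w : Fin n → ℕ) (I : List (Fin n)) :
    wlen w (fun i => I.count i) = seqW w I := by
  rw [← seqW_multiList w (fun i => I.count i)]
  exact (seqW_perm w (perm_multiList I)).symm

end Infra6
/-- `f` has weight `N` iff `f^[N]` is a non-zero polynomial and
`f ∘ δ_t = t^N f^[N] + O(t^{N+1})` in `C^∞(U)`. -/
theorem weight_iff_leading_part
    {n : ℕ} (hn : 0 < n) {w : Fin n → ℕ} (hw : IsWeight w)
    {U : Set (Fin n → ℝ)} (hU : IsOpen U) (h0 : (0 : Fin n → ℝ) ∈ U)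
    {f : (Fin n → ℝ) → ℝ} (hf : ContDiffOn ℝ (⊤ : ℕ∞) f U) (N : ℕ) :
    WeightEq w f N ↔
      (homPart w f N ≠ 0 ∧
        BigOC U (fun t x => f (dil w t x) - t ^ N * homPart w f N x)
          ((N : ℤ) + 1)) := by
  have hw1 : ∀ i, 1 ≤ w i := fun i => hw.pos i
  have hf' : ContDiffOn ℝ (⊤ : ℕ∞) f U := hf.of_le (by simp)
  have hzpow : ∀ t : ℝ, |t| ^ ((N : ℤ) + 1) = |t| ^ (N + 1) := by
    intro t
    rw [show ((N : ℤ) + 1) = ((N + 1 : ℕ) : ℤ) from by push_cast; ring, zpow_natCast]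
  constructor
  · rintro ⟨hge, α₀, hα₀len, hα₀ne⟩
    have hα₀N : wlen w α₀ = N := by exact_mod_cast hα₀len
    constructor
    · -- homPart ≠ 0
      intro hP
      have hval := pdPow_homPart_zero hw1 f N α₀
      rw [hP, if_pos hα₀N] at hval
      have hz : pdPow α₀ (0 : (Fin n → ℝ) → ℝ) 0 = 0 := by
        rw [pdPow_def, show (0 : (Fin n → ℝ) → ℝ) = (fun _ => (0:ℝ)) from rfl, vfSeq_zero]
      exact hα₀ne (by rw [← hval, hz])
    · -- the O(t^{N+1}) estimate
      refine fun K hKU hK β => ?_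
      -- the polynomial part up to weight N equals homPart (lower coefficients vanish)
      have hPfP : (fun x => ∑ α ∈ (mIdx n (N+1)).filter (fun α => wlen w α ≤ N),
          taylorCoeff α f * monom α x) = homPart w f N := by
        funext x
        show _ = ∑ α ∈ (mIdx n (N+1)).filter (fun α => wlen w α = N),
          taylorCoeff α f * monom α x
        symm
        apply Finset.sum_subset
        · intro a ha
          rw [Finset.mem_filter] at ha ⊢
          exact ⟨ha.1, le_of_eq ha.2⟩
        · intro α hα hα2
          have h1 : wlen w α ≤ N := (Finset.mem_filter.1 hα).2
          have h2 : wlen w α ≠ N :=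
            fun he => hα2 (Finset.mem_filter.2 ⟨(Finset.mem_filter.1 hα).1, he⟩)
          have h3 : (wlen w α : ℤ) < (N : ℤ) := by
            have := lt_of_le_of_ne h1 h2
            exact_mod_cast this
          have h4 : taylorCoeff α f = 0 := by
            unfold taylorCoeff
            rw [hge α h3, mul_zero]
          rw [h4, zero_mul]
      have hPfsm : ContDiff ℝ (⊤ : ℕ∞) (fun x => ∑ α ∈ (mIdx n (N+1)).filter
          (fun α => wlen w α ≤ N), taylorCoeff α f * monom α x) :=
        contDiff_finsum _ (fun α => fun y => taylorCoeff α f * monom α y)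
          (fun a _ => contDiff_term _ _)
      -- the remainder
      have hRsm : ContDiffOn ℝ (⊤ : ℕ∞) (fun x => f x - ∑ α ∈ (mIdx n (N+1)).filter
          (fun α => wlen w α ≤ N), taylorCoeff α f * monom α x) U :=
        hf'.sub hPfsm.contDiffOn
      have hRvan : ∀ I : List (Fin n), seqW w I ≤ N →
          vfSeq (cP n) I (fun x => f x - ∑ α ∈ (mIdx n (N+1)).filter
            (fun α => wlen w α ≤ N), taylorCoeff α f * monom α x) 0 = 0 := by
        intro I hI
        have h1 := vfSeq_sub hU hf' hPfsm.contDiffOn I h0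
        rw [h1]
        show vfSeq (cP n) I f 0 - vfSeq (cP n) I (fun x => ∑ α ∈ (mIdx n (N+1)).filter
          (fun α => wlen w α ≤ N), taylorCoeff α f * monom α x) 0 = 0
        have h2 := vfSeq_eq_pdPow_zero hU h0 hf' I
        have h3 := vfSeq_eq_pdPow_zero isOpen_univ (Set.mem_univ 0) hPfsm.contDiffOn I
        rw [h2, h3]
        have hγlen : wlen w (fun i => I.count i) ≤ N := by rw [wlen_count]; exact hI
        have h4 := pdPow_sum_monoms (fun i => I.count i)
          ((mIdx n (N+1)).filter (fun α => wlen w α ≤ N)) (fun α => taylorCoeff α f)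
        rw [h4, if_pos (Finset.mem_filter.2 ⟨mem_mIdx_of_wlen hw1 hγlen, hγlen⟩),
          taylorCoeff_mul_fact, sub_self]
      -- core estimate for the β-derivative of the remainder
      have hRβsm : ContDiffOn ℝ (⊤ : ℕ∞) (vfSeq (cP n) (multiList β)
          (fun x => f x - ∑ α ∈ (mIdx n (N+1)).filter (fun α => wlen w α ≤ N),
            taylorCoeff α f * monom α x)) U := contDiffOn_vfSeq hU hRsm _
      have hRβvan : ∀ I : List (Fin n), seqW w I < N + 1 - wlen w β →
          vfSeq (cP n) I (vfSeq (cP n) (multiList β)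
            (fun x => f x - ∑ α ∈ (mIdx n (N+1)).filter (fun α => wlen w α ≤ N),
              taylorCoeff α f * monom α x)) 0 = 0 := by
        intro I hI
        rw [← vfSeq_append]
        apply hRvan
        rw [seqW_append, seqW_multiList]
        omega
      obtain ⟨C, hC0, t₁, ht₁0, ht₁1, hCb⟩ :=
        core_claim hn hw1 hU h0 hK (N + 1 - wlen w β) _ hRβsm hRβvan
      obtain ⟨r, hr0, hrU⟩ := exists_closedBall_subset hU h0
      obtain ⟨t₂, ht₂0, ht₂1, ht₂b⟩ := dil_small hw1 hK hr0
      refine ⟨C, ?_⟩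
      have hev : ∀ᶠ t in (nhdsWithin (0:ℝ) {(0:ℝ)}ᶜ), |t| < min t₁ t₂ := by
        apply Filter.Eventually.filter_mono nhdsWithin_le_nhds
        filter_upwards [Metric.ball_mem_nhds (0:ℝ) (lt_min ht₁0 ht₂0)] with t htb
        simpa [Real.dist_eq] using htb
      filter_upwards [hev] with t htlt
      intro x hx
      have ht1 : |t| ≤ t₁ := le_of_lt (lt_of_lt_of_le htlt (min_le_left _ _))
      have ht2 : |t| ≤ t₂ := le_of_lt (lt_of_lt_of_le htlt (min_le_right _ _))
      have htle1 : |t| ≤ 1 := le_trans ht2 ht₂1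
      have hxU : dil w t x ∈ U := by
        apply hrU
        rw [Metric.mem_closedBall, dist_zero_right]
        exact ht₂b t ht2 x hx
      have hVt : IsOpen ((fun y => dil w t y) ⁻¹' U) := hU.preimage (dil_continuous w t)
      have hxVt : x ∈ (fun y => dil w t y) ⁻¹' U := hxU
      -- on the preimage, u t agrees with R ∘ δ_t
      have hEq : Set.EqOn (fun y => f (dil w t y) - t ^ N * homPart w f N y)
          (fun y => (fun z => f z - ∑ α ∈ (mIdx n (N+1)).filter (fun α => wlen w α ≤ N),
            taylorCoeff α f * monom α z) (dil w t y)) ((fun y => dil w t y) ⁻¹' U) := by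
        intro y _
        show f (dil w t y) - t ^ N * homPart w f N y
            = f (dil w t y) - ∑ α ∈ (mIdx n (N+1)).filter (fun α => wlen w α ≤ N),
                taylorCoeff α f * monom α (dil w t y)
        have := congrFun hPfP (dil w t y)
        rw [this, homPart_dil]
      have h5 : pdPow β (fun y => f (dil w t y) - t ^ N * homPart w f N y) x
          = pdPow β (fun y => (fun z => f z - ∑ α ∈ (mIdx n (N+1)).filter
              (fun α => wlen w α ≤ N), taylorCoeff α f * monom α z) (dil w t y)) x := by
        exact vfSeq_congr hVt hEq (multiList β) hxVt
      have h6 : pdPow β (fun y => (fun z => f z - ∑ α ∈ (mIdx n (N+1)).filter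
            (fun α => wlen w α ≤ N), taylorCoeff α f * monom α z) (dil w t y)) x
          = t ^ (wlen w β) * vfSeq (cP n) (multiList β)
              (fun z => f z - ∑ α ∈ (mIdx n (N+1)).filter (fun α => wlen w α ≤ N),
                taylorCoeff α f * monom α z) (dil w t x) := by
        have hd := vfSeq_dil hU hRsm t (multiList β) x hxU
        rw [seqW_multiList] at hd
        exact hd
      rw [h5, h6, abs_mul, abs_pow, hzpow t]
      have hb := hCb t ht1 x hx
      calc |t| ^ wlen w β * |vfSeq (cP n) (multiList β)
            (fun z => f z - ∑ α ∈ (mIdx n (N+1)).filter (fun α => wlen w α ≤ N),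
              taylorCoeff α f * monom α z) (dil w t x)|
          ≤ |t| ^ wlen w β * (C * |t| ^ (N + 1 - wlen w β)) := by
            apply mul_le_mul_of_nonneg_left hb (by positivity)
        _ = C * (|t| ^ wlen w β * |t| ^ (N + 1 - wlen w β)) := by ring
        _ ≤ C * |t| ^ (N + 1) := by
            apply mul_le_mul_of_nonneg_left _ (le_of_lt hC0)
            rw [← pow_add]
            exact pow_le_pow_of_le_one (abs_nonneg t) htle1 (by omega)
  · rintro ⟨hPne, hbig⟩
    constructor
    · -- WeightGe
      intro α hαlt
      have hklt : wlen w α < N := by exact_mod_cast hαlt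
      obtain ⟨C, hC⟩ := hbig {0} (Set.singleton_subset_iff.2 h0) isCompact_singleton α
      have hval : ∀ t : ℝ, pdPow α (fun x => f (dil w t x) - t ^ N * homPart w f N x) 0
          = t ^ (wlen w α) * pdPow α f 0 := by
        intro t
        have hVt : IsOpen ((fun y => dil w t y) ⁻¹' U) := hU.preimage (dil_continuous w t)
        have h0Vt : (0 : Fin n → ℝ) ∈ (fun y => dil w t y) ⁻¹' U := by
          show dil w t 0 ∈ U
          rw [dil_zero]
          exact h0
        have ha : ContDiffOn ℝ (⊤ : ℕ∞) (fun y => f (dil w t y))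
            ((fun y => dil w t y) ⁻¹' U) := contDiffOn_comp_dil hf' t
        have hb : ContDiff ℝ (⊤ : ℕ∞) (fun y => t ^ N * homPart w f N y) :=
          contDiff_const.mul (contDiff_homPart w f N)
        have h1 : pdPow α (fun y => f (dil w t y) - t ^ N * homPart w f N y) 0
            = pdPow α (fun y => f (dil w t y)) 0
              - pdPow α (fun y => t ^ N * homPart w f N y) 0 := by
          exact vfSeq_sub hVt ha hb.contDiffOn (multiList α) h0Vt
        have h2 : pdPow α (fun y => f (dil w t y)) 0 = t ^ (wlen w α) * pdPow α f 0 := by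
          have hd := vfSeq_dil (w := w) hU hf' t (multiList α) 0 (by rw [dil_zero]; exact h0)
          rw [seqW_multiList, dil_zero] at hd
          exact hd
        have h3 : pdPow α (fun y => t ^ N * homPart w f N y) 0
            = t ^ N * pdPow α (homPart w f N) 0 := by
          exact vfSeq_const_mul isOpen_univ (contDiff_homPart w f N).contDiffOn _
            (multiList α) (Set.mem_univ 0)
        have h4 : pdPow α (homPart w f N) 0 = 0 := by
          have hh := pdPow_homPart_zero hw1 f N α
          rw [hh, if_neg (show ¬ wlen w α = N by omega)]
        rw [h1, h2, h3, h4, mul_zero, sub_zero]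
      have hev2 : ∀ᶠ t in (nhdsWithin (0:ℝ) {(0:ℝ)}ᶜ),
          |pdPow α f 0| ≤ C * |t| ^ (N + 1 - wlen w α) := by
        filter_upwards [hC, self_mem_nhdsWithin] with t htb htne
        have hb := htb 0 (Set.mem_singleton 0)
        rw [hval t, abs_mul, abs_pow, hzpow t] at hb
        have htpos : 0 < |t| ^ (wlen w α) := pow_pos (abs_pos.2 htne) _
        have hsplit : |t| ^ (N + 1) = |t| ^ (wlen w α) * |t| ^ (N + 1 - wlen w α) := by
          rw [← pow_add]
          congr 1
          omega
        have hrhs : C * |t| ^ (N + 1) = |t| ^ (wlen w α) * (C * |t| ^ (N + 1 - wlen w α)) := by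
          rw [hsplit]
          ring
        rw [hrhs] at hb
        exact le_of_mul_le_mul_left hb htpos
      have htend : Filter.Tendsto (fun t : ℝ => C * |t| ^ (N + 1 - wlen w α))
          ((nhdsWithin (0:ℝ) {(0:ℝ)}ᶜ)) (nhds 0) := by
        have hcont : Filter.Tendsto (fun t : ℝ => C * |t| ^ (N + 1 - wlen w α))
            (nhds 0) (nhds (C * |(0:ℝ)| ^ (N + 1 - wlen w α))) :=
          (continuous_const.mul ((continuous_abs).pow _)).tendsto 0
        have hz : C * |(0:ℝ)| ^ (N + 1 - wlen w α) = 0 := by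
          rw [abs_zero, zero_pow (by omega : N + 1 - wlen w α ≠ 0), mul_zero]
        rw [hz] at hcont
        exact hcont.mono_left nhdsWithin_le_nhds
      have hle := ge_of_tendsto htend hev2
      have habs : |pdPow α f 0| = 0 := le_antisymm hle (abs_nonneg _)
      exact abs_eq_zero.1 habs
    · -- existence of a nonvanishing derivative of weight N
      by_contra hc
      push_neg at hc
      apply hPne
      funext x
      show (∑ α ∈ (mIdx n (N+1)).filter (fun α => wlen w α = N),
        taylorCoeff α f * monom α x) = 0
      apply Finset.sum_eq_zero
      intro α hα
      have hl : wlen w α = N := (Finset.mem_filter.1 hα).2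
      have hp := hc α (by exact_mod_cast hl)
      have : taylorCoeff α f = 0 := by
        unfold taylorCoeff
        rw [hp, mul_zero]
      rw [this, zero_mul]

end Carnot
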